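/- arXiv:1012.2522 — 8 statements merged into one kernel-verified Lean document; each statement's English description precedes it below -/
import Mathlib

section
/- Let I be a countably infinite set and let C = ⋃_{i∈I} C_i where the sets C_i are nonempty, pairwise disjoint, and sup_{i∈I} |C_i| < ω (i.e., the sizes are uniformly bounded by some natural number). If H is a filter on C each of whose elements intersects all but finitely many of the sets C_i, then H has an infinite pseudointersection, i.e., there exists an infinite set A ⊆ C such that A \ H is finite for every H ∈ H. -/
/-!
Choose `S ∈ H` and `m` with `m` minimal such that infinitely many blocks `C i` meet `S` in
between `1` and `m` points. Let `J` be the set of these blocks and `A` the union of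
their traces `S ∩ C i`, `i ∈ J`. If some `S' ∈ H` missed a point of infinitely many of these
traces, then `S' ∩ S ∈ H` would meet infinitely many blocks (all but finitely many are met) in
fewer than `m` points, contradicting minimality. Hence `A \ S'` lies in finitely many traces.
-/

open Set Filter

section Traces

variable {ι α : Type*} (C : ι → Set α)

def smallTraceIndices (S : Set α) (m : ℕ) : Set ι :=
  {i | (S ∩ C i).ncard ∈ Icc 1 m}

variable {C}

theorem infinite_smallTraceIndices_univ [Infinite ι] {n : ℕ} (hfin : ∀ i, (C i).Finite)
    (hbd : ∀ i, (C i).ncard ≤ n) (hmeet : {i | (C i).Nonempty}ᶜ.Finite) :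
    (smallTraceIndices C univ n).Infinite := by
  refine hmeet.infinite_compl.mono fun i hi => ?_
  rw [compl_compl] at hi
  simp only [smallTraceIndices, univ_inter, mem_ofPred_eq, mem_Icc]
  exact ⟨(ncard_pos (hfin i)).2 hi, hbd i⟩

theorem infinite_smallTraceIndices_inter_pred {S S₀ : Set α} {m : ℕ}
    (hfin : ∀ i, (C i).Finite) (hmeet : {i | (S ∩ S₀ ∩ C i).Nonempty}ᶜ.Finite)
    (hbad : {i ∈ smallTraceIndices C S₀ m | ¬S₀ ∩ C i ⊆ S}.Infinite) :
    (smallTraceIndices C (S ∩ S₀) (m - 1)).Infinite := by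
  refine (hbad.sdiff hmeet).mono ?_
  rintro i ⟨⟨⟨-, hle⟩, hnsub⟩, hne⟩
  rw [mem_compl_iff, not_not] at hne
  have hshrink : S ∩ S₀ ∩ C i ⊂ S₀ ∩ C i :=
    ⟨fun x hx => ⟨hx.1.2, hx.2⟩, fun h => hnsub fun x hx => (h hx).1.1⟩
  have hlt := ncard_lt_ncard hshrink ((hfin i).inter_of_right _)
  have hpos := (ncard_pos ((hfin i).inter_of_right _)).2 hne
  exact ⟨hpos, by omega⟩

theorem exists_mem_infinite_traces_almost_subset [Infinite ι] {H : Filter α} {n : ℕ}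
    (hfin : ∀ i, (C i).Finite) (hbd : ∀ i, (C i).ncard ≤ n)
    (hmeet : ∀ S ∈ H, {i | (S ∩ C i).Nonempty}ᶜ.Finite) :
    ∃ S₀ ∈ H, ∃ J : Set ι, J.Infinite ∧ (∀ i ∈ J, (S₀ ∩ C i).Nonempty) ∧
      ∀ S ∈ H, {i ∈ J | ¬S₀ ∩ C i ⊆ S}.Finite := by
  classical
  have hex : ∃ m, ∃ S ∈ H, (smallTraceIndices C S m).Infinite :=
    ⟨n, univ, univ_mem,
      infinite_smallTraceIndices_univ hfin hbd (by simpa using hmeet univ univ_mem)⟩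
  obtain ⟨S₀, hS₀, hJ⟩ := Nat.find_spec hex
  have hm : 0 < Nat.find hex := by
    obtain ⟨i, hi⟩ := hJ.nonempty
    exact hi.1.trans hi.2
  refine ⟨S₀, hS₀, _, hJ, fun i hi => nonempty_of_ncard_ne_zero (Nat.one_le_iff_ne_zero.1 hi.1),
    fun S hS => ?_⟩
  by_contra hbad
  exact Nat.find_min hex (Nat.sub_one_lt hm.ne') ⟨S ∩ S₀, inter_mem hS hS₀,
    infinite_smallTraceIndices_inter_pred hfin (hmeet _ (inter_mem hS hS₀)) hbad⟩

end Traces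

theorem stmt0_general {ι α : Type*} [Infinite ι] (C : ι → Set α)
    (hdisj : Pairwise (Function.onFun Disjoint C))
    (hbd : ∃ n : ℕ, ∀ i, (C i).Finite ∧ (C i).ncard ≤ n)
    (H : Filter α)
    (hmeet : ∀ S ∈ H, {i : ι | (S ∩ C i).Nonempty}ᶜ.Finite) :
    ∃ A : Set α, A ⊆ ⋃ i, C i ∧ A.Infinite ∧ ∀ S ∈ H, (A \ S).Finite := by
  obtain ⟨n, hbd⟩ := hbd
  have hfin i := (hbd i).1
  obtain ⟨S₀, -, J, hJ, hne, halmost⟩ :=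
    exists_mem_infinite_traces_almost_subset hfin (fun i => (hbd i).2) hmeet
  have hinj : J.InjOn fun i => S₀ ∩ C i := fun i hi j _ hij => by
    by_contra hij'
    obtain ⟨x, hx⟩ := hne i hi
    exact disjoint_left.1 (hdisj hij') hx.2 ((show S₀ ∩ C i = S₀ ∩ C j from hij) ▸ hx).2
  refine ⟨⋃ i ∈ J, S₀ ∩ C i, iUnion₂_subset fun i _ => inter_subset_right.trans (subset_iUnion C i),
    hJ.biUnion hinj, fun S hS => ?_⟩
  refine ((halmost S hS).biUnion fun i _ => (hfin i).inter_of_right S₀).subset ?_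
  rintro x ⟨hx, hxS⟩
  obtain ⟨i, hi, hxi⟩ := mem_iUnion₂.1 hx
  exact mem_iUnion₂.2 ⟨i, ⟨hi, fun h => hxS (h hxi)⟩, hxi⟩

/-- If `C = ⋃ i, C i` with the `C i` nonempty, pairwise disjoint and of
uniformly bounded finite cardinality (indexed by a countably infinite set), and `H` is a
(proper) filter each of whose elements meets all but finitely many `C i`, then `H` has an
infinite pseudointersection contained in `C`. -/
theorem stmt0 {ι α : Type*} [Countable ι] [Infinite ι] (C : ι → Set α)
    (hne : ∀ i, (C i).Nonempty) (hdisj : Pairwise (Function.onFun Disjoint C))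
    (hbd : ∃ n : ℕ, ∀ i, (C i).Finite ∧ (C i).ncard ≤ n)
    (H : Filter α) [H.NeBot]
    (hmeet : ∀ S ∈ H, {i : ι | (S ∩ C i).Nonempty}ᶜ.Finite) :
    ∃ A : Set α, A ⊆ ⋃ i, C i ∧ A.Infinite ∧ ∀ S ∈ H, (A \ S).Finite :=
  stmt0_general C hdisj hbd H hmeet
end

section
/- Let ξ : ω → ω be a finite-to-one surjection such that lim inf_n |ξ⁻¹(n)| < ∞, and let F be a filter on ω with ξ(F) = Fr (the Fréchet filter). Then F has an infinite pseudointersection; consequently, any sequence (x_n) in a topological space X that F-converges to a point x_∞ admits a subsequence converging to x_∞ in the usual sense. -/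
open Set Filter Topology

/-!
Among all `S ∈ F` choose one for which infinitely many fibres `ξ⁻¹(b)` meet `S` in exactly `k`
points, with `k` least possible; the bound `m` on infinitely many fibres makes such a `k` exist,
and `k > 0` because `ξ(S)` is cofinite. Let `A` be the union of the traces of `S` on these fibres.
By minimality of `k`, a set `S' ∈ F` has fewer than `k` points in `S ∩ ξ⁻¹(b)` for only finitely
many `b`; on every other fibre of `A` it contains the whole trace, so `A \ S'` is finite.
Enumerating `A` increasingly gives the subsequence.
-/

theorem exists_infinite_setOf_eq_of_infinite_setOf_le {β : Type*} {f : β → ℕ} {m : ℕ}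
    (hm : {b | f b ≤ m}.Infinite) : ∃ k, {b | f b = k}.Infinite := by
  by_contra! h
  exact hm (((finite_le_nat m).biUnion fun k _ => h k).subset fun b hb => mem_biUnion hb rfl)

section FiberCard

variable {α β : Type*}

noncomputable def fiberCard (ξ : α → β) (S : Set α) (b : β) : ℕ := (S ∩ ξ ⁻¹' {b}).ncard

variable {ξ : α → β}

theorem finite_setOf_fiberCard_eq_zero (hfin : ∀ b, (ξ ⁻¹' {b}).Finite) {S : Set α}
    (hS : (ξ '' S)ᶜ.Finite) : {b | fiberCard ξ S b = 0}.Finite := by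
  refine hS.subset fun b hb ⟨a, haS, hab⟩ => ?_
  rw [mem_ofPred_eq, fiberCard, ncard_eq_zero ((hfin b).subset inter_subset_right)] at hb
  exact hb.subset ⟨haS, hab⟩

theorem fiberCard_inter_lt (hfin : ∀ b, (ξ ⁻¹' {b}).Finite) {S T : Set α} {a : α}
    (ha : a ∈ T \ S) : fiberCard ξ (S ∩ T) (ξ a) < fiberCard ξ T (ξ a) :=
  ncard_lt_ncard
    ⟨fun _ hx => ⟨hx.1.2, hx.2⟩, fun h => ha.2 (h ⟨ha.1, rfl⟩).1.1⟩
    ((hfin _).subset inter_subset_right)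

theorem exists_infinite_pseudointersection_of_cofinite_le_map
    (hfin : ∀ b, (ξ ⁻¹' {b}).Finite) {m : ℕ} (hm : {b | (ξ ⁻¹' {b}).ncard ≤ m}.Infinite)
    {F : Filter α} (hF : cofinite ≤ map ξ F) :
    ∃ A : Set α, A.Infinite ∧ ∀ S ∈ F, (A \ S).Finite := by
  classical
  have hP : ∃ k, ∃ S ∈ F, {b | fiberCard ξ S b = k}.Infinite :=
    (exists_infinite_setOf_eq_of_infinite_setOf_le (f := fiberCard ξ univ) (by simpa [fiberCard] using hm)).imp
      fun _ hk => ⟨univ, univ_mem, hk⟩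
  set k := Nat.find hP
  obtain ⟨S₀, hS₀, hJ⟩ : ∃ S ∈ F, {b | fiberCard ξ S b = k}.Infinite := Nat.find_spec hP
  have hsmall : ∀ S ∈ F, {b | fiberCard ξ S b < k}.Finite := fun S hS =>
    ((finite_lt_nat k).biUnion fun j hj =>
      not_infinite.1 fun h => Nat.find_min hP hj ⟨S, hS, h⟩).subset fun b hb => mem_biUnion hb rfl
  have hk : k ≠ 0 := by
    intro h0
    rw [h0] at hJ
    exact hJ (finite_setOf_fiberCard_eq_zero hfin (hF (image_mem_map hS₀)))
  refine ⟨S₀ ∩ ξ ⁻¹' {b | fiberCard ξ S₀ b = k}, ?_, fun S hS => ?_⟩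
  · refine (hJ.mono fun b hb => ?_).of_image ξ
    obtain ⟨a, haS₀, rfl⟩ := nonempty_of_ncard_ne_zero (hb.trans_ne hk)
    exact ⟨a, ⟨haS₀, hb⟩, rfl⟩
  · refine ((hsmall _ (inter_mem hS hS₀)).preimage' fun b _ => hfin b).subset ?_
    rintro a ⟨⟨haS₀, hak⟩, haS⟩
    exact (fiberCard_inter_lt hfin ⟨haS₀, haS⟩).trans_eq hak

end FiberCard

theorem exists_strictMono_tendsto_of_pseudointersection {F : Filter ℕ} {A : Set ℕ}
    (hA : A.Infinite) (hAF : ∀ S ∈ F, (A \ S).Finite) :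
    ∃ φ : ℕ → ℕ, StrictMono φ ∧ Tendsto φ atTop F := by
  have hcof : Tendsto (Nat.nth (· ∈ A)) atTop cofinite := by
    rw [← Nat.cofinite_eq_atTop]
    exact (Nat.nth_injective hA).tendsto_cofinite
  refine ⟨Nat.nth (· ∈ A), Nat.nth_strictMono hA, fun S hS => mem_map.2 ?_⟩
  filter_upwards [hcof.eventually (hAF S hS).eventually_cofinite_notMem] with n hn
  by_contra hnS
  exact hn ⟨Nat.nth_mem_of_infinite hA n, hnS⟩

theorem stmt4_general (ξ : ℕ → ℕ) (hfin : ∀ n, (ξ ⁻¹' {n}).Finite)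
    (hliminf : ∃ m : ℕ, {n : ℕ | (ξ ⁻¹' {n}).ncard ≤ m}.Infinite)
    (F : Filter ℕ) (hmap : Filter.map ξ F = Filter.cofinite) :
    (∃ A : Set ℕ, A.Infinite ∧ ∀ S ∈ F, (A \ S).Finite) ∧
    ∀ (X : Type*) [TopologicalSpace X] (x : ℕ → X) (xlim : X),
      Filter.Tendsto x F (𝓝 xlim) →
        ∃ φ : ℕ → ℕ, StrictMono φ ∧ Filter.Tendsto (x ∘ φ) Filter.atTop (𝓝 xlim) := by
  obtain ⟨m, hm⟩ := hliminf
  obtain ⟨A, hA, hAF⟩ := exists_infinite_pseudointersection_of_cofinite_le_map hfin hm hmap.ge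
  refine ⟨⟨A, hA, hAF⟩, fun X _ x xlim hx => ?_⟩
  obtain ⟨φ, hφ, hφF⟩ := exists_strictMono_tendsto_of_pseudointersection hA hAF
  exact ⟨φ, hφ, hx.comp hφF⟩

/-- if `ξ` is a finite-to-one surjection with `liminf |ξ⁻¹(n)| < ∞`
(i.e. infinitely many `n` have `|ξ⁻¹(n)|` bounded by a fixed `m`) and `F` is a filter
with `ξ(F) = Fr`, then `F` has an infinite pseudointersection; consequently every
`F`-convergent sequence has a convergent subsequence. -/
theorem stmt4 (ξ : ℕ → ℕ) (hfin : ∀ n, (ξ ⁻¹' {n}).Finite) (hsurj : Function.Surjective ξ)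
    (hliminf : ∃ m : ℕ, {n : ℕ | (ξ ⁻¹' {n}).ncard ≤ m}.Infinite)
    (F : Filter ℕ) (hmap : Filter.map ξ F = Filter.cofinite) :
    (∃ A : Set ℕ, A.Infinite ∧ ∀ S ∈ F, (A \ S).Finite) ∧
    ∀ (X : Type*) [TopologicalSpace X] (x : ℕ → X) (xlim : X),
      Filter.Tendsto x F (𝓝 xlim) →
        ∃ φ : ℕ → ℕ, StrictMono φ ∧ Filter.Tendsto (x ∘ φ) Filter.atTop (𝓝 xlim) :=
  stmt4_general ξ hfin hliminf F hmap
end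

section
/- Let ξ : ω → ω be a finite-to-one surjection with lim_n |ξ⁻¹(n)| = ∞ and ∏_{n∈ω} (1 − 2^{−|ξ⁻¹(n)|}) = 0. For each n ∈ ω, the set F_n = {A ⊆ ω : A ∩ ξ⁻¹(k) ≠ ∅ for all k ≥ n} has Haar measure zero in the Cantor cube 2^ω. Consequently, any filter F on ω with ξ(F) = Fr is contained in a set of Haar measure zero. -/
/-!
Let `c_k = |ξ⁻¹(k)|`. The fibres of `ξ` are disjoint, so the events "`A` meets `ξ⁻¹(k)`" are
independent of probability `1 - 2^{-c_k}`; hence `F_n` has measure at most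
`∏_{n ≤ k < N} (1 - 2^{-c_k})` for every `N`. All factors are positive, so the divergence of the
full product to `0` passes to its tails, and `F_n` is null. If `ξ(F) = Fr`, then for `A ∈ F` the
image `ξ[A]` is cofinite, i.e. `A ∈ F_n` for some `n`, so `F ⊆ ⋃ₙ F_n`.
-/

open Set Filter MeasureTheory Classical Topology

/-- Characteristic-function embedding of `𝒫(ω)` into the Cantor space `2^ω`. -/
noncomputable def chiFun (A : Set ℕ) : ℕ → Bool := fun n => decide (n ∈ A)

lemma tendsto_prod_Ico_zero_of_tendsto_prod_range {G₀ : Type*} [CommGroupWithZero G₀]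
    [TopologicalSpace G₀] [SeparatelyContinuousMul G₀] {r : ℕ → G₀} (hr : ∀ k, r k ≠ 0)
    (h : Tendsto (fun N => ∏ k ∈ Finset.range N, r k) atTop (𝓝 0)) (n : ℕ) :
    Tendsto (fun N => ∏ k ∈ Finset.Ico n N, r k) atTop (𝓝 0) := by
  have hhead : ∏ k ∈ Finset.range n, r k ≠ 0 := Finset.prod_ne_zero_iff.2 fun k _ => hr k
  refine (zero_div (∏ k ∈ Finset.range n, r k) ▸ h.div_const _).congr' ?_
  filter_upwards [eventually_ge_atTop n] with N hN
  rw [← Finset.prod_range_mul_prod_Ico r hN, mul_div_cancel_left₀ _ hhead]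

lemma one_sub_half_pow_eq_ofReal (c : ℕ) :
    1 - (1 / 2 : ENNReal) ^ c = ENNReal.ofReal (1 - ((2 : ℝ) ^ c)⁻¹) := by
  rw [ENNReal.ofReal_sub _ (by positivity), ENNReal.ofReal_one,
    ENNReal.ofReal_inv_of_pos (by positivity), ENNReal.ofReal_pow zero_le_two,
    ENNReal.ofReal_ofNat, one_div, ENNReal.inv_pow]

section HittingEvents

variable {ι : Type*} {μ : Measure (ℕ → Bool)}

lemma measurableSet_hitAll (s : ι → Finset ℕ) (K : Finset ι) :
    MeasurableSet {x : ℕ → Bool | ∀ k ∈ K, ∃ m ∈ s k, x m = true} := by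
  simpa only [ofPred_forall] using K.measurableSet_biInter fun k _ => by measurability

lemma measure_zeros_inter_hitAll
    (hμ : ∀ Z : Finset ℕ, μ {x | ∀ i ∈ Z, x i = false} = (1 / 2) ^ Z.card)
    (s : ι → Finset ℕ) (K : Finset ι) (hK : (K : Set ι).PairwiseDisjoint s)
    (Z : Finset ℕ) (hZ : ∀ k ∈ K, Disjoint Z (s k)) :
    μ ({x | ∀ i ∈ Z, x i = false} ∩ {x | ∀ k ∈ K, ∃ m ∈ s k, x m = true}) =
      (1 / 2) ^ Z.card * ∏ k ∈ K, (1 - (1 / 2) ^ (s k).card) := by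
  induction K using Finset.induction_on generalizing Z with
  | empty => simpa using hμ Z
  | @insert a K ha ih =>
    rw [Finset.coe_insert, Set.pairwiseDisjoint_insert_of_notMem (by exact_mod_cast ha)] at hK
    have hZa : Disjoint Z (s a) := hZ a (K.mem_insert_self a)
    have hZK : ∀ k ∈ K, Disjoint Z (s k) := fun k hk => hZ k (Finset.mem_insert_of_mem hk)
    have hZaK : ∀ k ∈ K, Disjoint (Z ∪ s a) (s k) := fun k hk =>
      Finset.disjoint_union_left.2 ⟨hZK k hk, hK.2 k hk⟩
    -- Meeting `s a` is the complement of vanishing on it, and vanishing on `s a` is again an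
    -- event of the induction hypothesis.
    have hsplit : {x : ℕ → Bool | ∀ i ∈ Z, x i = false} ∩
          {x | ∀ k ∈ insert a K, ∃ m ∈ s k, x m = true} =
        ({x | ∀ i ∈ Z, x i = false} ∩ {x | ∀ k ∈ K, ∃ m ∈ s k, x m = true}) \
          ({x | ∀ i ∈ Z ∪ s a, x i = false} ∩ {x | ∀ k ∈ K, ∃ m ∈ s k, x m = true}) := by
      ext x
      have hhit : (∃ m ∈ s a, x m = true) ↔ ¬∀ m ∈ s a, x m = false := by simp
      simp only [Finset.forall_mem_insert, Finset.forall_mem_union, Set.mem_sdiff, mem_inter_iff,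
        mem_ofPred_eq, hhit]
      tauto
    have hsub : {x : ℕ → Bool | ∀ i ∈ Z ∪ s a, x i = false} ∩
          {x | ∀ k ∈ K, ∃ m ∈ s k, x m = true} ⊆
        {x | ∀ i ∈ Z, x i = false} ∩ {x | ∀ k ∈ K, ∃ m ∈ s k, x m = true} :=
      fun x hx => ⟨fun i hi => hx.1 i (Finset.mem_union_left _ hi), hx.2⟩
    have hfin : μ ({x | ∀ i ∈ Z ∪ s a, x i = false} ∩ {x | ∀ k ∈ K, ∃ m ∈ s k, x m = true}) ≠ ⊤ :=
      measure_ne_top_of_subset inter_subset_left (by rw [hμ]; exact ENNReal.pow_ne_top (by simp))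
    have hmeas : MeasurableSet ({x : ℕ → Bool | ∀ i ∈ Z ∪ s a, x i = false} ∩
        {x | ∀ k ∈ K, ∃ m ∈ s k, x m = true}) :=
      (by measurability : MeasurableSet _).inter (measurableSet_hitAll s K)
    rw [hsplit, measure_sdiff hsub hmeas.nullMeasurableSet hfin, ih hK.1 Z hZK, ih hK.1 _ hZaK,
      Finset.card_union_of_disjoint hZa, Finset.prod_insert ha, pow_add]
    have hP : (1 / 2 : ENNReal) ^ Z.card * ∏ k ∈ K, (1 - (1 / 2) ^ (s k).card) ≠ ⊤ :=
      ENNReal.mul_ne_top (ENNReal.pow_ne_top (by simp))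
        (ENNReal.prod_ne_top fun _ _ => ENNReal.sub_ne_top ENNReal.one_ne_top)
    rw [mul_left_comm _ (1 - _), ENNReal.sub_mul (fun _ _ => hP), one_mul, mul_right_comm,
      mul_comm ((1 / 2) ^ (s a).card)]

lemma measure_hitAll_fibers
    (hμ : ∀ Z : Finset ℕ, μ {x | ∀ i ∈ Z, x i = false} = (1 / 2) ^ Z.card)
    {ξ : ℕ → ι} (hfin : ∀ k, (ξ ⁻¹' {k}).Finite) (K : Finset ι) :
    μ {x | ∀ k ∈ K, ∃ m, ξ m = k ∧ x m = true} =
      ∏ k ∈ K, (1 - (1 / 2) ^ (ξ ⁻¹' {k}).ncard) := by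
  have hdisj : (K : Set ι).PairwiseDisjoint fun k => (hfin k).toFinset := fun k _ l _ hkl =>
    Finset.disjoint_left.2 fun m hk hl => hkl (by simp_all)
  simpa [Set.ncard_eq_toFinset_card _ (hfin _)] using
    measure_zeros_inter_hitAll hμ (fun k => (hfin k).toFinset) K hdisj ∅ (by simp)

lemma measure_forall_ge_hit_fiber_eq_zero
    (hμ : ∀ Z : Finset ℕ, μ {x | ∀ i ∈ Z, x i = false} = (1 / 2) ^ Z.card)
    {ξ : ℕ → ℕ} (hfin : ∀ k, (ξ ⁻¹' {k}).Finite) (hsurj : Function.Surjective ξ)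
    (hprod : Tendsto (fun N => ∏ k ∈ Finset.range N, (1 - ((2 : ℝ) ^ (ξ ⁻¹' {k}).ncard)⁻¹))
      atTop (𝓝 0)) (n : ℕ) :
    μ {x | ∀ k ≥ n, ∃ m, ξ m = k ∧ x m = true} = 0 := by
  have hpos : ∀ k, 0 < 1 - ((2 : ℝ) ^ (ξ ⁻¹' {k}).ncard)⁻¹ := fun k => by
    have hc : (ξ ⁻¹' {k}).ncard ≠ 0 := (Set.ncard_pos (hfin k)).2 (hsurj k) |>.ne'
    simpa using inv_lt_one_of_one_lt₀ (one_lt_pow₀ one_lt_two hc)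
  have htail := (ENNReal.tendsto_ofReal
    (tendsto_prod_Ico_zero_of_tendsto_prod_range (fun k => (hpos k).ne') hprod n))
  rw [ENNReal.ofReal_zero] at htail
  refine le_antisymm (ge_of_tendsto htail (Eventually.of_forall fun N => ?_)) zero_le
  rw [ENNReal.ofReal_prod_of_nonneg fun k _ => (hpos k).le]
  simp only [← one_sub_half_pow_eq_ofReal, ← measure_hitAll_fibers hμ hfin]
  exact measure_mono fun x hx k hk => hx k (Finset.mem_Ico.1 hk).1

end HittingEvents

lemma exists_forall_ge_mem_image_of_map_eq_cofinite {α : Type*} {ξ : α → ℕ} {F : Filter α}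
    (hF : map ξ F = cofinite) {A : Set α} (hA : A ∈ F) : ∃ n, ∀ k ≥ n, k ∈ ξ '' A := by
  have hcof : ξ '' A ∈ cofinite := hF ▸ image_mem_map hA
  obtain ⟨b, hb⟩ := (mem_cofinite.1 hcof).bddAbove
  exact ⟨b + 1, fun k hk => by_contra fun hkA => by have := hb hkA; omega⟩

theorem stmt5_general (ξ : ℕ → ℕ) (hfin : ∀ n, (ξ ⁻¹' {n}).Finite) (hsurj : Function.Surjective ξ)
    (hprod : Filter.Tendsto
      (fun N => ∏ n ∈ Finset.range N, (1 - ((2 : ℝ) ^ (ξ ⁻¹' {n}).ncard)⁻¹))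
      Filter.atTop (nhds 0))
    (μ : Measure (ℕ → Bool))
    (hμ : ∀ (s : Finset ℕ) (f : ℕ → Bool),
      μ {x | ∀ i ∈ s, x i = f i} = (1 / 2 : ENNReal) ^ s.card) :
    (∀ n : ℕ, μ {x : ℕ → Bool | ∀ k ≥ n, ∃ m, ξ m = k ∧ x m = true} = 0) ∧
    ∀ F : Filter ℕ, Filter.map ξ F = Filter.cofinite →
      ∃ S : Set (ℕ → Bool), μ S = 0 ∧ chiFun '' {A : Set ℕ | A ∈ F} ⊆ S := by
  have hnull := measure_forall_ge_hit_fiber_eq_zero (fun Z => hμ Z fun _ => false) hfin hsurj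
    hprod
  refine ⟨hnull, fun F hF => ⟨_, measure_iUnion_null hnull, ?_⟩⟩
  rintro _ ⟨A, hA, rfl⟩
  obtain ⟨n, hn⟩ := exists_forall_ge_mem_image_of_map_eq_cofinite hF hA
  refine mem_iUnion.2 ⟨n, fun k hk => ?_⟩
  obtain ⟨m, hmA, rfl⟩ := hn k hk
  exact ⟨m, rfl, by simpa [chiFun] using hmA⟩

/-- let `ξ` be a finite-to-one surjection with `|ξ⁻¹(n)| → ∞` and
`∏ (1 - 2^{-|ξ⁻¹(n)|}) = 0`, and let `μ` be the Haar (uniform product) measure on the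
Cantor cube `2^ω`.  Then each set `F_n = {A : ∀ k ≥ n, A ∩ ξ⁻¹(k) ≠ ∅}` is `μ`-null,
and every filter `F` with `ξ(F) = Fr` is contained in a `μ`-null set. -/
theorem stmt5 (ξ : ℕ → ℕ) (hfin : ∀ n, (ξ ⁻¹' {n}).Finite) (hsurj : Function.Surjective ξ)
    (hlim : Filter.Tendsto (fun n => (ξ ⁻¹' {n}).ncard) Filter.atTop Filter.atTop)
    (hprod : Filter.Tendsto
      (fun N => ∏ n ∈ Finset.range N, (1 - ((2 : ℝ) ^ (ξ ⁻¹' {n}).ncard)⁻¹))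
      Filter.atTop (nhds 0))
    (μ : Measure (ℕ → Bool))
    (hμ : ∀ (s : Finset ℕ) (f : ℕ → Bool),
      μ {x | ∀ i ∈ s, x i = f i} = (1 / 2 : ENNReal) ^ s.card) :
    (∀ n : ℕ, μ {x : ℕ → Bool | ∀ k ≥ n, ∃ m, ξ m = k ∧ x m = true} = 0) ∧
    ∀ F : Filter ℕ, Filter.map ξ F = Filter.cofinite →
      ∃ S : Set (ℕ → Bool), μ S = 0 ∧ chiFun '' {A : Set ℕ | A ∈ F} ⊆ S :=
  stmt5_general ξ hfin hsurj hprod μ hμ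
end

section
/- Let X be a topological space and x ∈ X a point having a countable i-network (N_i)_{i∈ω} (each N_i is an infinite subset of X, and every open neighborhood of x contains some N_i). Let ξ : ω → ω be a finite-to-one surjection with lim_n |ξ⁻¹(n)| = ∞. Then there exists an injective sequence (x_k)_{k∈ω} in X and a filter F on ω with ξ(F) = Fr such that (x_k) F-converges to x. -/
/-!
Enumerate each fibre `ξ⁻¹(n)` increasingly and pick `y k ∈ N i` injectively, where `k` is the
`i`-th element of its fibre. Let `F` be generated by `ξ⁻¹` of cofinite sets and `y⁻¹` of
neighbourhoods of `x`, so that `y → x` along `F` and `ξ(F) ≤ Fr` hold by construction. Conversely,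
a neighbourhood `U` of `x` contains some `N i`, so `ξ(y⁻¹ U)` contains every `n` whose fibre has
more than `i` elements; as fibre sizes tend to infinity, these are all but finitely many `n`.
-/

open Set Filter Topology

theorem exists_injective_forall_mem_of_infinite {X : Type*} (s : ℕ → Set X)
    (hs : ∀ k, (s k).Infinite) : ∃ y : ℕ → X, Function.Injective y ∧ ∀ k, y k ∈ s k := by
  choose f hf using fun (k : ℕ) (t : Finset X) => ((hs k).sdiff t.finite_toSet).nonempty
  classical
  -- `chosen k` holds the first `k` terms of the sequence
  let chosen : ℕ → Finset X := fun k => Nat.rec ∅ (fun m c => insert (f m c) c) k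
  have chosen_succ (k : ℕ) : chosen (k + 1) = insert (f k (chosen k)) (chosen k) := rfl
  have mem_chosen {a b : ℕ} (hab : a < b) : f a (chosen a) ∈ chosen b := by
    induction b, hab using Nat.le_induction with
    | base => exact chosen_succ a ▸ Finset.mem_insert_self _ _
    | succ m _ ih => exact chosen_succ m ▸ Finset.mem_insert_of_mem ih
  refine ⟨fun k => f k (chosen k), .of_lt_imp_ne fun a b hab heq => ?_, fun k => (hf k _).1⟩
  exact (hf b (chosen b)).2 (heq ▸ mem_chosen hab)

section FiberIndex

variable {β : Type*} [DecidableEq β] (ξ : ℕ → β)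

/-- The position of `k`, counted from `0`, in the increasing enumeration of its fibre `ξ⁻¹(ξ k)`. -/
def fiberIndex (k : ℕ) : ℕ := Nat.count (fun m => ξ m = ξ k) k

theorem exists_fiberIndex_eq {n : β} {i : ℕ} (hi : i < (ξ ⁻¹' {n}).ncard) :
    ∃ k, ξ k = n ∧ fiberIndex ξ k = i := by
  have hlt : ∀ hf : (Set.ofPred fun m => ξ m = n).Finite, i < hf.toFinset.card := fun hf => by
    rwa [← ncard_eq_toFinset_card _ hf]
  have hmem : ξ (Nat.nth (fun m => ξ m = n) i) = n := Nat.nth_mem i hlt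
  refine ⟨_, hmem, ?_⟩
  simpa only [fiberIndex, hmem] using Nat.count_nth hlt

theorem image_mem_cofinite_of_fiberIndex_eq
    (hlim : Tendsto (fun n => (ξ ⁻¹' {n}).ncard) cofinite atTop) {t : Set ℕ} {i : ℕ}
    (ht : ∀ k, fiberIndex ξ k = i → k ∈ t) : ξ '' t ∈ cofinite := by
  refine mem_of_superset (hlim.eventually_gt_atTop i) fun n hn => ?_
  obtain ⟨k, rfl, hk⟩ := exists_fiberIndex_eq ξ hn
  exact ⟨k, ht k hk, rfl⟩

end FiberIndex

theorem stmt6_general {X : Type*} [TopologicalSpace X] (x : X) (N : ℕ → Set X)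
    (hNinf : ∀ i, (N i).Infinite)
    (hNnet : ∀ U : Set X, IsOpen U → x ∈ U → ∃ i, N i ⊆ U)
    (ξ : ℕ → ℕ)
    (hlim : Filter.Tendsto (fun n => (ξ ⁻¹' {n}).ncard) Filter.atTop Filter.atTop) :
    ∃ (y : ℕ → X) (F : Filter ℕ), Function.Injective y ∧
      Filter.map ξ F = Filter.cofinite ∧ Filter.Tendsto y F (𝓝 x) := by
  obtain ⟨y, hy_inj, hyN⟩ :=
    exists_injective_forall_mem_of_infinite (fun k => N (fiberIndex ξ k)) fun k => hNinf _
  refine ⟨y, comap y (𝓝 x) ⊓ comap ξ cofinite, hy_inj, ?_, tendsto_iff_comap.mpr inf_le_left⟩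
  rw [Filter.push_pull, inf_eq_right]
  refine le_map fun t ht => ?_
  obtain ⟨U, hU, hUt⟩ := mem_comap.mp ht
  obtain ⟨V, hVU, hV, hxV⟩ := mem_nhds_iff.mp hU
  obtain ⟨i, hNiV⟩ := hNnet V hV hxV
  exact image_mem_cofinite_of_fiberIndex_eq ξ (hlim.mono_left Nat.cofinite_eq_atTop.le)
    (i := i) fun k hk => hUt (hVU (hNiV (hk ▸ hyN k)))

/-- if `x` has a countable i-network `(N i)` and `ξ` is a finite-to-one
surjection with `|ξ⁻¹(n)| → ∞`, then there is an injective sequence in `X` that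
`F`-converges to `x` for some filter `F` with `ξ(F) = Fr` (a `ξ`-meager filter). -/
theorem stmt6 {X : Type*} [TopologicalSpace X] (x : X) (N : ℕ → Set X)
    (hNinf : ∀ i, (N i).Infinite)
    (hNnet : ∀ U : Set X, IsOpen U → x ∈ U → ∃ i, N i ⊆ U)
    (ξ : ℕ → ℕ) (hfin : ∀ n, (ξ ⁻¹' {n}).Finite) (hsurj : Function.Surjective ξ)
    (hlim : Filter.Tendsto (fun n => (ξ ⁻¹' {n}).ncard) Filter.atTop Filter.atTop) :
    ∃ (y : ℕ → X) (F : Filter ℕ), Function.Injective y ∧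
      Filter.map ξ F = Filter.cofinite ∧ Filter.Tendsto y F (𝓝 x) :=
  stmt6_general x N hNinf hNnet ξ hlim
end

section
/- Let C be a compact Hausdorff space and g : C → [0,1] a continuous surjection that is irreducible (g(C') ≠ [0,1] for every proper closed subset C' ⊆ C). Then C has no isolated points, and the family N = {g⁻¹(U) : U ∈ B}, where B is a countable base of nonempty open subsets of [0,1], is a countable i-network at every point of C; hence every point of C has countable network character. -/
open Set Filter Topology unitInterval

/-! An irreducible map sends the complement of a proper closed set onto a set with nonempty
interior, so every nonempty open set of the domain contains the preimage of a nonempty open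
set of the target, hence of a basic one. Nonempty open subsets of `[0,1]` are infinite, and
so are their preimages under a surjection; a point with such a neighbourhood network cannot
be isolated. -/

theorem IsOpen.infinite_of_nonempty {X : Type*} [TopologicalSpace X] [T1Space X]
    [PerfectSpace X] {s : Set X} (hs : IsOpen s) (hne : s.Nonempty) : s.Infinite :=
  let ⟨x, hx⟩ := hne
  infinite_of_mem_nhds x (hs.mem_nhds hx)

theorem exists_isOpen_nonempty_preimage_subset_of_irreducible {X Y : Type*}
    [TopologicalSpace X] [TopologicalSpace Y] [CompactSpace X] [T2Space Y]
    {g : X → Y} (hg : Continuous g)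
    (hirr : ∀ C' : Set X, IsClosed C' → C' ≠ univ → g '' C' ≠ univ)
    {U : Set X} (hU : IsOpen U) (hne : U.Nonempty) :
    ∃ V : Set Y, IsOpen V ∧ V.Nonempty ∧ g ⁻¹' V ⊆ U := by
  have hUc : Uᶜ ≠ univ := fun h => hne.ne_empty (compl_univ_iff.mp h)
  refine ⟨(g '' Uᶜ)ᶜ, ?_, ?_, ?_⟩
  · exact ((hU.isClosed_compl.isCompact.image hg).isClosed).isOpen_compl
  · exact nonempty_compl.mpr (hirr _ hU.isClosed_compl hUc)
  · rw [preimage_compl, compl_subset_comm]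
    exact subset_preimage_image g Uᶜ

theorem stmt10_general {C : Type*} [TopologicalSpace C] [CompactSpace C]
    (g : C → unitInterval) (hg : Continuous g) (hsurj : Function.Surjective g)
    (hirr : ∀ C' : Set C, IsClosed C' → C' ≠ Set.univ → g '' C' ≠ Set.univ)
    (B : ℕ → Set unitInterval) (hBne : ∀ i, (B i).Nonempty)
    (hbasis : TopologicalSpace.IsTopologicalBasis (Set.range B)) :
    (∀ c : C, ¬IsOpen ({c} : Set C)) ∧
    (∀ i, (g ⁻¹' B i).Infinite) ∧
    ∀ (c : C) (U : Set C), IsOpen U → c ∈ U → ∃ i, g ⁻¹' B i ⊆ U := by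
  have hnet : ∀ (c : C) (U : Set C), IsOpen U → c ∈ U → ∃ i, g ⁻¹' B i ⊆ U := by
    intro c U hU hcU
    obtain ⟨V, hV, ⟨y, hy⟩, hVU⟩ :=
      exists_isOpen_nonempty_preimage_subset_of_irreducible hg hirr hU ⟨c, hcU⟩
    obtain ⟨_, ⟨i, rfl⟩, -, hBV⟩ := hbasis.exists_subset_of_mem_open hy hV
    exact ⟨i, (preimage_mono hBV).trans hVU⟩
  have hinf : ∀ i, (g ⁻¹' B i).Infinite := fun i =>
    ((hbasis.isOpen (mem_range_self i)).infinite_of_nonempty (hBne i)).preimage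
      (by simp [hsurj.range_eq])
  refine ⟨fun c hc => ?_, hinf, hnet⟩
  obtain ⟨i, hi⟩ := hnet c {c} hc rfl
  exact hinf i ((finite_singleton c).subset hi)

/-- if `g : C → [0,1]` is an irreducible continuous surjection from a
compact Hausdorff space, then `C` has no isolated points and, for any countable base `B`
of nonempty open subsets of `[0,1]`, the preimages `g⁻¹(B i)` form a countable i-network
at every point of `C`. -/
theorem stmt10 {C : Type*} [TopologicalSpace C] [CompactSpace C] [T2Space C]
    (g : C → unitInterval) (hg : Continuous g) (hsurj : Function.Surjective g)
    (hirr : ∀ C' : Set C, IsClosed C' → C' ≠ Set.univ → g '' C' ≠ Set.univ)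
    (B : ℕ → Set unitInterval) (hBopen : ∀ i, IsOpen (B i)) (hBne : ∀ i, (B i).Nonempty)
    (hbasis : TopologicalSpace.IsTopologicalBasis (Set.range B)) :
    (∀ c : C, ¬IsOpen ({c} : Set C)) ∧
    (∀ i, (g ⁻¹' B i).Infinite) ∧
    ∀ (c : C) (U : Set C), IsOpen U → c ∈ U → ∃ i, g ⁻¹' B i ⊆ U :=
  stmt10_general g hg hsurj hirr B hBne hbasis
end

section
/- Let X be a functionally Hausdorff zero-dimensional space (or more generally assume below Y is path-connected), and let Y be a topological space containing two nonempty open sets W₀, W₁ with disjoint closures. If X contains an injective sequence (x_n) that F-converges to a point x_∞ ∈ X for some meager filter F on ω, then the function space C_p(X, Y) of continuous functions with the topology of pointwise convergence is meager (of the first Baire category) in itself. -/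
/-!
Split the sequence into the finite blocks `x '' (ξ ⁻¹' {n})`. For an open `W ⊆ Y` with a point
`w`, the set of `f` that, on every block from the `m`-th on, send some point outside `W` is
closed (blocks are finite) and has empty interior: a basic neighbourhood of `f` fixes `f` on a
finite set, which misses all but finitely many blocks, and `f` can be redefined to be `w` on one
such block. Now `f x_∞` misses `closure W₀` or `closure W₁`, say `closure W`; then `f (x k) ∉ W`
for `F`-almost all `k`, so, as `ξ(F)` is the Fréchet filter, `f` leaves `W` on every late block:
these countably many nowhere dense sets cover `C_p(X, Y)`.
The redefinition uses a clopen neighbourhood of the block in the zero-dimensional case, and in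
the path-connected case a path through the finitely many prescribed values, run along a
real-valued interpolant obtained from the separating functions.
-/

open Set Filter Topology

section FunctionallyHausdorff

variable {X : Type*} [TopologicalSpace X]

lemma t1Space_of_forall_exists_continuous_ne
    (hfH : ∀ x y : X, x ≠ y → ∃ f : X → ℝ, Continuous f ∧ f x ≠ f y) : T1Space X :=
  t1Space_iff_exists_open.2 fun x y hxy => by
    obtain ⟨f, hf, hfxy⟩ := hfH x y hxy
    exact ⟨f ⁻¹' {f y}ᶜ, isOpen_compl_singleton.preimage hf, hfxy, fun h => h rfl⟩

lemma exists_continuous_eq_one_eq_zero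
    (hfH : ∀ x y : X, x ≠ y → ∃ f : X → ℝ, Continuous f ∧ f x ≠ f y)
    {a : X} {s : Finset X} (ha : a ∉ s) :
    ∃ e : X → ℝ, Continuous e ∧ e a = 1 ∧ ∀ b ∈ s, e b = 0 := by
  classical
  induction s using Finset.induction_on with
  | empty => exact ⟨fun _ => 1, continuous_const, rfl, by simp⟩
  | insert b s hb ih =>
    obtain ⟨e, he, hea, hes⟩ := ih fun h => ha (Finset.mem_insert_of_mem h)
    obtain ⟨f, hf, hfab⟩ := hfH a b fun h => ha (h ▸ Finset.mem_insert_self b s)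
    refine ⟨fun z => e z * ((f z - f b) / (f a - f b)), by fun_prop, ?_, ?_⟩
    · simp [hea, sub_ne_zero.2 hfab]
    · simp +contextual [hes]

lemma exists_continuous_real_eq_on_finset
    (hfH : ∀ x y : X, x ≠ y → ∃ f : X → ℝ, Continuous f ∧ f x ≠ f y)
    (s : Finset X) (t : X → ℝ) : ∃ h : X → ℝ, Continuous h ∧ ∀ a ∈ s, h a = t a := by
  classical
  induction s using Finset.induction_on with
  | empty => exact ⟨0, continuous_const, by simp⟩
  | insert a s ha ih =>
    obtain ⟨h, hh, hhs⟩ := ih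
    obtain ⟨e, he, hea, hes⟩ := exists_continuous_eq_one_eq_zero hfH ha
    refine ⟨fun z => h z + (t a - h a) * e z, by fun_prop, ?_⟩
    simp +contextual [hea, hes, hhs]

end FunctionallyHausdorff

lemma PathConnectedSpace.exists_path_subset_range {Y : Type*} [TopologicalSpace Y]
    [PathConnectedSpace Y] {s : Set Y} (hs : s.Finite) :
    ∃ (y₀ y₁ : Y) (γ : Path y₀ y₁), s ⊆ range γ := by
  induction s, hs using Set.Finite.induction_on with
  | empty =>
    obtain ⟨y⟩ := PathConnectedSpace.nonempty (X := Y)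
    exact ⟨y, y, Path.refl y, empty_subset _⟩
  | @insert p s _ _ ih =>
    obtain ⟨y₀, y₁, γ, hγ⟩ := ih
    refine ⟨y₀, p, γ.trans (somePath y₁ p), ?_⟩
    rw [Path.trans_range]
    exact insert_subset (Or.inr (Path.target_mem_range _)) (hγ.trans subset_union_left)

section Extension

variable {X Y : Type*} [TopologicalSpace X] [TopologicalSpace Y]

lemma exists_continuous_eq_on_finset_of_pathConnectedSpace [PathConnectedSpace Y]
    (hfH : ∀ x y : X, x ≠ y → ∃ f : X → ℝ, Continuous f ∧ f x ≠ f y)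
    (s : Finset X) (v : X → Y) : ∃ g : X → Y, Continuous g ∧ ∀ a ∈ s, g a = v a := by
  obtain ⟨_, _, γ, hγ⟩ := PathConnectedSpace.exists_path_subset_range (s.finite_toSet.image v)
  choose! t ht using fun a (ha : a ∈ s) => hγ (mem_image_of_mem v ha)
  obtain ⟨h, hh, hht⟩ := exists_continuous_real_eq_on_finset hfH s fun a => t a
  refine ⟨γ.extend ∘ h, γ.continuous_extend.comp hh, fun a ha => ?_⟩
  rw [Function.comp_apply, hht a ha, γ.extend_extends', ht a ha]

lemma exists_continuous_eqOn_eq_const_of_isTopologicalBasis_isClopen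
    (hX : TopologicalSpace.IsTopologicalBasis {s : Set X | IsClopen s})
    {f : X → Y} (hf : Continuous f) {T : Set X} (hT : IsClosed T) (S : Finset X)
    (hST : Disjoint (S : Set X) T) (w : Y) :
    ∃ g : X → Y, Continuous g ∧ EqOn g f T ∧ ∀ a ∈ S, g a = w := by
  classical
  have hS : ∀ a ∈ S, ∃ c : Set X, IsClopen c ∧ a ∈ c ∧ c ⊆ Tᶜ := fun a ha =>
    hX.exists_subset_of_mem_open (hST.notMem_of_mem_left ha) hT.isOpen_compl
  choose! c hc hac hcT using hS
  have hU : IsClopen (⋃ a ∈ S, c a) := isClopen_biUnion_finset hc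
  refine ⟨(⋃ a ∈ S, c a).piecewise (fun _ => w) f, ?_, fun b hb => ?_, fun a ha => ?_⟩
  · exact continuous_const.piecewise (by simp [hU.frontier_eq]) hf
  · exact piecewise_eq_of_notMem _ _ _ (by simpa using fun a ha hb' => hcT a ha hb' hb)
  · exact piecewise_eq_of_mem _ _ _ (mem_biUnion ha (hac a ha))

lemma exists_continuous_eqOn_eq_const
    (hfH : ∀ x y : X, x ≠ y → ∃ f : X → ℝ, Continuous f ∧ f x ≠ f y)
    (hdichotomy : TopologicalSpace.IsTopologicalBasis {s : Set X | IsClopen s} ∨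
      PathConnectedSpace Y)
    {f : X → Y} (hf : Continuous f) (T S : Finset X) (hST : Disjoint S T) (w : Y) :
    ∃ g : X → Y, Continuous g ∧ EqOn g f T ∧ ∀ a ∈ S, g a = w := by
  classical
  rcases hdichotomy with hX | hY
  · have := t1Space_of_forall_exists_continuous_ne hfH
    exact exists_continuous_eqOn_eq_const_of_isTopologicalBasis_isClopen hX hf
      T.finite_toSet.isClosed S (Finset.disjoint_coe.2 hST) w
  · have := hY
    obtain ⟨g, hg, hgv⟩ := exists_continuous_eq_on_finset_of_pathConnectedSpace hfH (S ∪ T)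
      fun a => if a ∈ S then w else f a
    refine ⟨g, hg, fun a ha => ?_, fun a ha => ?_⟩
    · rw [hgv a (Finset.mem_union_right _ ha), if_neg (Finset.disjoint_right.1 hST ha)]
    · rw [hgv a (Finset.mem_union_left _ ha), if_pos ha]

end Extension

section Blocks

variable {X Y : Type*} [TopologicalSpace Y]

def exitsBlocksFrom (ξ : ℕ → ℕ) (x : ℕ → X) (W : Set Y) (m : ℕ) : Set (X → Y) :=
  {f | ∀ n ≥ m, ∃ k, ξ k = n ∧ f (x k) ∉ W}

lemma isClosed_exitsBlocksFrom {ξ : ℕ → ℕ} (hξ : ∀ n, (ξ ⁻¹' {n}).Finite) (x : ℕ → X)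
    {W : Set Y} (hW : IsOpen W) (m : ℕ) : IsClosed (exitsBlocksFrom ξ x W m) := by
  have : exitsBlocksFrom ξ x W m =
      ⋂ n ≥ m, ⋃ k ∈ ξ ⁻¹' {n}, (fun f : X → Y => f (x k)) ⁻¹' Wᶜ := by
    ext f
    simp [exitsBlocksFrom]
  rw [this]
  exact isClosed_biInter fun n _ =>
    (hξ n).isClosed_biUnion fun k _ => hW.isClosed_compl.preimage (continuous_apply _)

lemma dense_of_forall_finset_exists_eqOn {P : (X → Y) → Prop} {D : Set {f // P f}}
    (h : ∀ f : {f // P f}, ∀ I : Finset X, ∃ g ∈ D, EqOn g.1 f.1 I) : Dense D := by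
  refine dense_iff_inter_open.2 fun U hU ⟨f, hfU⟩ => ?_
  obtain ⟨V, hV, rfl⟩ := isOpen_induced_iff.1 hU
  obtain ⟨I, u, hu, hIu⟩ := isOpen_pi_iff.1 hV f.1 hfU
  obtain ⟨g, hgD, hgf⟩ := h f I
  exact ⟨g, hIu fun a ha => (hgf ha).symm ▸ (hu a ha).2, hgD⟩

lemma dense_compl_exitsBlocksFrom [TopologicalSpace X]
    (hfH : ∀ x y : X, x ≠ y → ∃ f : X → ℝ, Continuous f ∧ f x ≠ f y)
    (hdichotomy : TopologicalSpace.IsTopologicalBasis {s : Set X | IsClopen s} ∨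
      PathConnectedSpace Y)
    {ξ : ℕ → ℕ} (hξ : ∀ n, (ξ ⁻¹' {n}).Finite) {x : ℕ → X} (hx : Function.Injective x)
    {W : Set Y} (hW : W.Nonempty) (m : ℕ) :
    Dense (Subtype.val ⁻¹' exitsBlocksFrom ξ x W m : Set {f : X → Y // Continuous f})ᶜ := by
  classical
  refine dense_of_forall_finset_exists_eqOn fun f I => ?_
  have hI : (ξ '' (x ⁻¹' I)).Finite := (I.finite_toSet.preimage hx.injOn).image ξ
  obtain ⟨n, hnI, hmn⟩ := ((Nat.cofinite_eq_atTop ▸ hI.eventually_cofinite_notMem).and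
    (eventually_ge_atTop m)).exists
  obtain ⟨w, hw⟩ := hW
  have hdisj : Disjoint ((hξ n).toFinset.image x) I := by
    refine Finset.disjoint_left.2 fun a ha haI => ?_
    obtain ⟨k, hk, rfl⟩ := Finset.mem_image.1 ha
    exact hnI ⟨k, haI, by simpa using hk⟩
  obtain ⟨g, hg, hgf, hgw⟩ := exists_continuous_eqOn_eq_const hfH hdichotomy f.2 I _ hdisj w
  refine ⟨⟨g, hg⟩, fun hgE => ?_, hgf⟩
  obtain ⟨k, hk, hgk⟩ : ∃ k, ξ k = n ∧ g (x k) ∉ W := hgE n hmn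
  exact hgk ((hgw (x k) (Finset.mem_image_of_mem x ((hξ n).mem_toFinset.2 hk))).symm ▸ hw)

lemma isMeagre_exitsBlocksFrom [TopologicalSpace X]
    (hfH : ∀ x y : X, x ≠ y → ∃ f : X → ℝ, Continuous f ∧ f x ≠ f y)
    (hdichotomy : TopologicalSpace.IsTopologicalBasis {s : Set X | IsClopen s} ∨
      PathConnectedSpace Y)
    {ξ : ℕ → ℕ} (hξ : ∀ n, (ξ ⁻¹' {n}).Finite) {x : ℕ → X} (hx : Function.Injective x)
    {W : Set Y} (hWo : IsOpen W) (hW : W.Nonempty) (m : ℕ) :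
    IsMeagre (Subtype.val ⁻¹' exitsBlocksFrom ξ x W m : Set {f : X → Y // Continuous f}) :=
  (((isClosed_exitsBlocksFrom hξ x hWo m).preimage continuous_subtype_val).isNowhereDense_iff.2
    (interior_eq_empty_iff_dense_compl.2
      (dense_compl_exitsBlocksFrom hfH hdichotomy hξ hx hW m))).isMeagre

lemma exists_mem_exitsBlocksFrom {ξ : ℕ → ℕ} {F : Filter ℕ} (hξ : map ξ F = cofinite)
    {x : ℕ → X} {f : X → Y} {y : Y} (hfx : Tendsto (fun k => f (x k)) F (𝓝 y))
    {W : Set Y} (hy : y ∉ closure W) : ∃ m, f ∈ exitsBlocksFrom ξ x W m := by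
  have hF : ∀ᶠ k in F, f (x k) ∉ W :=
    (hfx.eventually (isClosed_closure.isOpen_compl.mem_nhds hy)).mono
      fun _ hk hW => hk (subset_closure hW)
  have : ∀ᶠ n in atTop, ∃ k, ξ k = n ∧ f (x k) ∉ W := by
    rw [← Nat.cofinite_eq_atTop, ← hξ]
    exact mem_of_superset (image_mem_map hF) fun _ ⟨k, hk, hkn⟩ => ⟨k, hkn, hk⟩
  exact eventually_atTop.1 this

end Blocks

/-- if `X` is functionally Hausdorff and zero-dimensional (or `Y` is
path-connected), `Y` has two nonempty open sets with disjoint closures, and `X` contains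
an injective sequence `F`-converging to some point for a meager filter `F` on `ω`
(meager = `ξ(F) = Fr` for a finite-to-one surjection `ξ`, by Talagrand), then
`C_p(X, Y)` — the continuous functions with the topology of pointwise convergence — is
meager in itself. -/
theorem stmt12 {X Y : Type*} [TopologicalSpace X] [TopologicalSpace Y]
    (hfH : ∀ x y : X, x ≠ y → ∃ f : X → ℝ, Continuous f ∧ f x ≠ f y)
    (hdichotomy : TopologicalSpace.IsTopologicalBasis {s : Set X | IsClopen s} ∨
      PathConnectedSpace Y)
    (W₀ W₁ : Set Y) (hW₀ : IsOpen W₀) (hW₁ : IsOpen W₁)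
    (hW₀ne : W₀.Nonempty) (hW₁ne : W₁.Nonempty)
    (hWdisj : Disjoint (closure W₀) (closure W₁))
    (x : ℕ → X) (hinj : Function.Injective x) (xlim : X)
    (F : Filter ℕ)
    (hmeager : ∃ ξ : ℕ → ℕ, Function.Surjective ξ ∧ (∀ n, (ξ ⁻¹' {n}).Finite) ∧
      Filter.map ξ F = Filter.cofinite)
    (hconv : Filter.Tendsto x F (𝓝 xlim)) :
    IsMeagre (Set.univ : Set {f : X → Y // Continuous f}) := by
  obtain ⟨ξ, -, hξ, hξF⟩ := hmeager
  refine (isMeagre_iUnion fun m =>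
    (isMeagre_exitsBlocksFrom hfH hdichotomy hξ hinj hW₀ hW₀ne m).union
      (isMeagre_exitsBlocksFrom hfH hdichotomy hξ hinj hW₁ hW₁ne m)).mono fun f _ => ?_
  have hfx := (f.2.tendsto xlim).comp hconv
  by_cases h₀ : f.1 xlim ∈ closure W₀
  · obtain ⟨m, hm⟩ := exists_mem_exitsBlocksFrom hξF hfx (disjoint_left.1 hWdisj h₀)
    exact mem_iUnion.2 ⟨m, Or.inr hm⟩
  · obtain ⟨m, hm⟩ := exists_mem_exitsBlocksFrom hξF hfx h₀
    exact mem_iUnion.2 ⟨m, Or.inl hm⟩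
end

section
/- No F_σ filter F on ω admits an injective F-convergent sequence in βω: if F is a filter on ω that is an F_σ subset of 2^ω, then there is no injective sequence (x_n) in βω F-converging to a point of βω. -/
/-!
Suppose `x n → U` along `F` with `x` injective. Recursively choose finite sets of indices `n` and
pairwise disjoint sets `B n ∈ x n` with `B n ∉ U`. At each stage the complement `D` of the sets
chosen so far lies in `U`, so `{n | D ∈ x n} ∈ F`; compactness of the closed pieces of `F` then
yields finitely many new indices, all with `D ∈ x n`, hitting every member of those pieces, and
finitely many distinct ultrafilters have pairwise disjoint members, which gives the new `B n ⊆ D`.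
The union `A` of the chosen indices meets every member of `F` in an infinite set. For `T ⊆ A` the
set `⋃ n ∈ T, B n` belongs to `x n` (`n ∈ A`) exactly when `n ∈ T`, so convergence forces
`T ∪ Aᶜ ∈ F` or `Tᶜ ∪ Aᶜ ∈ F`: the trace of `F` on `A` is a nonprincipal ultrafilter. Its image
in Cantor space is still `F_σ`, hence, by the symmetry `f ↦ !f`, also `G_δ`; it contains all
cofinite sets and its complement all finite sets, so both are dense, contradicting Baire.
-/

open Set Filter Topology Classical

open Function

theorem image_chiFun (G : Set (Set ℕ)) : chiFun '' G = {f | {n | f n} ∈ G} := by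
  ext f
  constructor
  · rintro ⟨A, hA, rfl⟩
    simpa [chiFun] using hA
  · intro hf
    exact ⟨_, hf, funext fun n => by simp [chiFun]⟩

theorem dense_setOf_eventually_eq {X : Type*} [TopologicalSpace X] (b : X) :
    Dense {f : ℕ → X | ∀ᶠ n in atTop, f n = b} := by
  intro f
  refine mem_closure_of_tendsto (f := fun N n => if n < N then f n else b) (b := atTop)
    (tendsto_pi_nhds.2 fun n => tendsto_const_nhds.congr' ?_) (.of_forall fun N => ?_)
  · filter_upwards [eventually_gt_atTop n] with N hN
    simp [hN]
  · filter_upwards [eventually_ge_atTop N] with n hn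
    simp [hn.not_gt]

theorem IsClosed.exists_finset_forall_exists_mem {ι : Type*} {K : Set (ι → Bool)}
    (hK : IsClosed K) {A : Set ι} (hA : ∀ f ∈ K, ∃ n ∈ A, f n) :
    ∃ t : Finset ι, ↑t ⊆ A ∧ ∀ f ∈ K, ∃ n ∈ t, f n := by
  obtain ⟨t, htA, htfin, hKt⟩ := hK.isCompact.elim_finite_subcover_image
    (c := fun n => {f : ι → Bool | f n})
    (fun n _ => (isOpen_discrete {true}).preimage (continuous_apply (A := fun _ => Bool) n))
    fun f hf => by simpa using hA f hf
  refine ⟨htfin.toFinset, by simpa using htA, fun f hf => by simpa using hKt hf⟩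

theorem not_isGδ_compl_image_chiFun {G : Set (Set ℕ)} (hcompl : ∀ T, Tᶜ ∈ G ↔ T ∉ G)
    (hinf : ∀ T ∈ G, T.Infinite) : ¬ IsGδ (chiFun '' G)ᶜ := by
  rw [image_chiFun]
  set S := {f : ℕ → Bool | {n | f n} ∈ G}
  intro hSc
  have hneg : (fun f n => !f n) ⁻¹' Sᶜ = S := by
    ext f
    have hnot : {n | (!f n) = true} = {n | f n}ᶜ := by ext; simp
    simp only [S, mem_preimage, mem_compl_iff, mem_ofPred_eq, hnot, hcompl, not_not]
  have hS : IsGδ S := hneg ▸ hSc.preimage (continuous_pi fun n =>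
    (continuous_of_discreteTopology (f := not)).comp (continuous_apply n))
  have hfin : {f : ℕ → Bool | ∀ᶠ n in atTop, f n = false} ⊆ Sᶜ := fun f hf hfS =>
    hinf _ hfS <| by simpa [← Nat.cofinite_eq_atTop] using hf
  have hcofin : {f : ℕ → Bool | ∀ᶠ n in atTop, f n = true} ⊆ S := fun f hf => by
    rw [← hneg]
    exact hfin (by simpa using hf)
  obtain ⟨f, hfS, hfSc⟩ := (Dense.inter_of_Gδ hS hSc
    ((dense_setOf_eventually_eq true).mono hcofin)
    ((dense_setOf_eventually_eq false).mono hfin)).nonempty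
  exact hfSc hfS

theorem Ultrafilter.exists_pairwiseDisjoint_mem {α : Type*} {S : Set (Ultrafilter α)}
    (hS : S.Finite) : ∃ V : Ultrafilter α → Set α, (∀ p, V p ∈ p) ∧ S.PairwiseDisjoint V :=
  Set.PairwiseDisjoint.exists_mem_filter (l := ((↑) : Ultrafilter α → Filter α))
    (fun _ _ _ _ hpq =>
      Ultrafilter.disjoint_iff_not_le.2 fun hle => hpq (Ultrafilter.coe_le_coe.1 hle)) hS

theorem Ultrafilter.not_disjoint_of_mem {α : Type*} (u : Ultrafilter α) {s t : Set α}
    (hs : s ∈ u) (ht : t ∈ u) : ¬ Disjoint s t :=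
  not_disjoint_iff_nonempty_inter.2 (nonempty_of_mem (inter_mem hs ht))

section Separates

variable {ι α : Type*} {x : ι → Ultrafilter α} {U : Ultrafilter α} {A A' : Set ι}
  {B B' : ι → Set α}

def Separates (x : ι → Ultrafilter α) (U : Ultrafilter α) (A : Set ι) (B : ι → Set α) : Prop :=
  (∀ n ∈ A, B n ∈ x n ∧ B n ∉ U) ∧ A.PairwiseDisjoint B

theorem Separates.congr (h : Separates x U A B) (hB : EqOn B' B A) : Separates x U A B' :=
  ⟨fun n hn => hB hn ▸ h.1 n hn, fun n hn m hm hnm => by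
    simpa only [onFun, hB hn, hB hm] using h.2 hn hm hnm⟩

theorem Separates.union (h : Separates x U A B) (h' : Separates x U A' B)
    (hdisj : ∀ n ∈ A, ∀ m ∈ A', Disjoint (B n) (B m)) : Separates x U (A ∪ A') B :=
  ⟨fun n hn => hn.elim (h.1 n) (h'.1 n), h.2.union h'.2 fun n hn m hm _ => hdisj n hn m hm⟩

theorem Separates.iUnion {A : ℕ → Set ι} {B : ℕ → ι → Set α} (hA : Monotone A)
    (hB : ∀ k, EqOn (B (k + 1)) (B k) (A k)) (h : ∀ k, Separates x U (A k) (B k)) :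
    ∃ B', Separates x U (⋃ k, A k) B' := by
  have hcoh : ∀ j k, j ≤ k → EqOn (B k) (B j) (A j) := by
    intro j k hjk
    induction k, hjk using Nat.le_induction with
    | base => exact fun _ _ => rfl
    | succ k hjk ih => exact fun n hn => (hB k (hA hjk hn)).trans (ih hn)
  let B' : ι → Set α := fun n => if hn : ∃ k, n ∈ A k then B (Nat.find hn) n else ∅
  have hB' : ∀ k, EqOn B' (B k) (A k) := fun k n hn => by
    have hex : ∃ k, n ∈ A k := ⟨k, hn⟩
    simp only [B', dif_pos hex]
    exact (hcoh _ k (Nat.find_min' hex hn) (Nat.find_spec hex)).symm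
  refine ⟨B', fun n hn => ?_,
    (pairwiseDisjoint_iUnion hA.directed_le).2 fun k => ((h k).congr (hB' k)).2⟩
  obtain ⟨k, hk⟩ := mem_iUnion.1 hn
  exact ((h k).congr (hB' k)).1 n hk

theorem exists_separates_of_finite {t : Set ι} (ht : t.Finite) (hinj : InjOn x t)
    (hU : ∀ n ∈ t, x n ≠ U) {D : Set α} (hD : ∀ n ∈ t, D ∈ x n) :
    ∃ B, Separates x U t B ∧ ∀ n, B n ⊆ D := by
  obtain ⟨V, hV, hVdisj⟩ := Ultrafilter.exists_pairwiseDisjoint_mem ((ht.image x).insert U)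
  have hxt : ∀ {n}, n ∈ t → x n ∈ insert U (x '' t) := fun hn =>
    mem_insert_of_mem _ (mem_image_of_mem x hn)
  refine ⟨fun n => D ∩ V (x n), ⟨fun n hn => ⟨inter_mem (hD n hn) (hV _), fun hVU => ?_⟩,
    fun n hn m hm hnm => ?_⟩, fun n => inter_subset_left⟩
  · exact U.not_disjoint_of_mem (mem_of_superset hVU inter_subset_right) (hV U)
      (hVdisj (hxt hn) (mem_insert U _) (hU n hn))
  · exact (hVdisj (hxt hn) (hxt hm) fun h => hnm (hinj hn hm h)).mono inter_subset_right
      inter_subset_right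

end Separates

section Construction

variable {F : Filter ℕ} {x : ℕ → Ultrafilter ℕ} {U : Ultrafilter ℕ}

theorem Separates.exists_extend (hF : ∀ S ∈ F, S.Infinite) (hinj : Injective x)
    (htend : Tendsto x F (𝓝 U)) {K : Set (ℕ → Bool)} (hK : IsClosed K)
    (hKF : ∀ f ∈ K, {n | f n} ∈ F) (N : ℕ) {s : Finset ℕ} {B : ℕ → Set ℕ}
    (hB : Separates x U s B) :
    ∃ (s' : Finset ℕ) (B' : ℕ → Set ℕ), s ⊆ s' ∧ EqOn B' B s ∧ Separates x U s' B' ∧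
      ∀ f ∈ K, ∃ n ∈ s', N < n ∧ f n := by
  set D := (⋃ n ∈ (s : Set ℕ), B n)ᶜ
  have hDU : D ∈ U := by
    rw [Ultrafilter.compl_mem_iff_notMem, Ultrafilter.finite_biUnion_mem_iff s.finite_toSet]
    rintro ⟨n, hn, hBn⟩
    exact (hB.1 n hn).2 hBn
  set E := {n | D ∈ x n} \ (s ∪ {n | x n = U})
  have hxU : {n | x n = U}.Subsingleton := fun _ h _ h' => hinj (h.trans h'.symm)
  have hE : ∀ S ∈ F, ∃ n ∈ E ∩ Ioi N, n ∈ S := fun S hS => by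
    obtain ⟨n, ⟨⟨hnS, hnD⟩, hn⟩, hNn⟩ := ((hF _ (inter_mem hS (htend
      ((ultrafilter_isOpen_basic D).mem_nhds hDU)))).sdiff
      (s.finite_toSet.union hxU.finite)).exists_gt N
    exact ⟨n, ⟨⟨hnD, hn⟩, hNn⟩, hnS⟩
  obtain ⟨t, htE, hKt⟩ := hK.exists_finset_forall_exists_mem fun f hf => hE _ (hKF f hf)
  obtain ⟨Bt, hBt, hBtD⟩ := exists_separates_of_finite t.finite_toSet hinj.injOn
    (fun n hn h => (htE hn).1.2 (Or.inr h)) fun n hn => (htE hn).1.1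
  let B' : ℕ → Set ℕ := fun n => if n ∈ s then B n else Bt n
  have hB's : EqOn B' B s := fun n hn => if_pos hn
  have hB't : EqOn B' Bt t := fun n hn => if_neg fun hs => (htE hn).1.2 (Or.inl hs)
  refine ⟨s ∪ t, B', Finset.subset_union_left, hB's, ?_, fun f hf => ?_⟩
  · rw [Finset.coe_union]
    refine (hB.congr hB's).union (hBt.congr hB't) fun n hn m hm => ?_
    rw [hB's hn, hB't hm]
    exact (disjoint_compl_right_iff_subset.2 (subset_biUnion_of_mem hn)).mono_right (hBtD m)
  · obtain ⟨n, hn, hfn⟩ := hKt f hf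
    exact ⟨n, Finset.mem_union_right s hn, (htE hn).2, hfn⟩

theorem exists_separates_of_tendsto (hF : ∀ S ∈ F, S.Infinite) {C : ℕ → Set (ℕ → Bool)}
    (hC : ∀ k, IsClosed (C k)) (hCF : chiFun '' {S | S ∈ F} = ⋃ k, C k) (hinj : Injective x)
    (htend : Tendsto x F (𝓝 U)) :
    ∃ A B, Separates x U A B ∧ ∀ S ∈ F, (S ∩ A).Infinite := by
  have hCF' : ∀ j, ∀ f ∈ C j, {n | f n} ∈ F := fun j f hf => by
    have hf' : f ∈ chiFun '' {S | S ∈ F} := hCF ▸ mem_iUnion_of_mem j hf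
    rwa [image_chiFun] at hf'
  let State := {p : Finset ℕ × (ℕ → Set ℕ) // Separates x U p.1 p.2}
  -- Stage `k` hits the members of `C 0, …, C k` above `k`, so each `C j` is hit unboundedly often.
  have step : ∀ k (p : State), ∃ q : State, p.1.1 ⊆ q.1.1 ∧ EqOn q.1.2 p.1.2 p.1.1 ∧
      ∀ f ∈ ⋃ j ≤ k, C j, ∃ n ∈ q.1.1, k < n ∧ f n := fun k p => by
    obtain ⟨s', B', h⟩ := p.2.exists_extend hF hinj htend
      ((finite_Iic k).isClosed_biUnion fun j _ => hC j)
      (fun f hf => by obtain ⟨j, -, hj⟩ := mem_iUnion₂.1 hf; exact hCF' j f hj) k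
    exact ⟨⟨(s', B'), h.2.2.1⟩, h.1, h.2.1, h.2.2.2⟩
  choose next hnext using step
  let seq : ℕ → State := fun k =>
    Nat.rec ⟨(∅, fun _ => ∅), by simp [Separates]⟩ next k
  obtain ⟨B, hB⟩ := Separates.iUnion (A := fun k => ((seq k).1.1 : Set ℕ))
    (monotone_nat_of_le_succ fun k => Finset.coe_subset.2 (hnext k (seq k)).1)
    (fun k => (hnext k (seq k)).2.1) fun k => (seq k).2
  refine ⟨_, B, hB, fun S hS => infinite_of_forall_exists_gt fun k => ?_⟩
  obtain ⟨j, hj⟩ := mem_iUnion.1 (hCF ▸ mem_image_of_mem chiFun hS)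
  obtain ⟨n, hn, hkn, hSn⟩ := (hnext (max j k) (seq (max j k))).2.2 _
    (mem_biUnion (le_max_left j k) hj)
  exact ⟨n, ⟨by simpa [chiFun] using hSn, mem_iUnion.2 ⟨max j k + 1, hn⟩⟩,
    (le_max_right j k).trans_lt hkn⟩

end Construction

theorem union_compl_mem_or_of_tendsto {ι α : Type*} {F : Filter ι} {x : ι → Ultrafilter α}
    {U : Ultrafilter α} (htend : Tendsto x F (𝓝 U)) {A : Set ι} {B : ι → Set α}
    (hBx : ∀ n ∈ A, B n ∈ x n) (hBdisj : A.PairwiseDisjoint B) (T : Set ι) :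
    T ∪ Aᶜ ∈ F ∨ Tᶜ ∪ Aᶜ ∈ F := by
  set W := ⋃ m ∈ T ∩ A, B m
  have hW : ∀ n ∈ A, W ∈ x n ↔ n ∈ T := fun n hn =>
    ⟨fun hW => by_contra fun hnT => (x n).not_disjoint_of_mem (hBx n hn) hW <|
      disjoint_iUnion₂_right.2 fun m hm => hBdisj hn hm.2 fun h => hnT (h ▸ hm.1),
    fun hnT => mem_of_superset (hBx n hn) (subset_biUnion_of_mem (u := B) ⟨hnT, hn⟩)⟩
  rcases U.mem_or_compl_mem W with hWU | hWU
  · refine .inl (mem_of_superset (htend ((ultrafilter_isOpen_basic _).mem_nhds hWU)) ?_)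
    exact fun n hn => (Classical.em (n ∈ A)).imp (fun hA => (hW n hA).1 hn) id
  · refine .inr (mem_of_superset (htend ((ultrafilter_isOpen_basic _).mem_nhds hWU)) ?_)
    exact fun n hn => (Classical.em (n ∈ A)).imp
      (fun hA hT => Ultrafilter.compl_mem_iff_notMem.1 hn ((hW n hA).2 hT)) id

theorem isGδ_compl_image_chiFun_union {S : Set (Set ℕ)} (hS : IsGδ (chiFun '' S)ᶜ) (R : Set ℕ) :
    IsGδ (chiFun '' {T | T ∪ R ∈ S})ᶜ := by
  rw [image_chiFun] at hS ⊢
  convert hS.preimage (f := fun (f : ℕ → Bool) n => f n || decide (n ∈ R))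
    (continuous_pi fun n => (continuous_of_discreteTopology
      (f := fun b => b || decide (n ∈ R))).comp (continuous_apply n)) using 1
  ext f
  have hor : {n | (f n || decide (n ∈ R)) = true} = {n | f n} ∪ R := by ext; simp
  simp only [mem_compl_iff, mem_preimage, mem_ofPred_eq, hor]

/-- no free `F_σ` filter on `ω` admits an injective `F`-convergent sequence
in `βω` (realized as the space of ultrafilters on `ℕ`). -/
theorem stmt14 (F : Filter ℕ) (hfree : Filter.cofinite ≤ F)
    (hFσ : ∃ C : ℕ → Set (ℕ → Bool), (∀ n, IsClosed (C n)) ∧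
      chiFun '' {A : Set ℕ | A ∈ F} = ⋃ n, C n) :
    ¬∃ (x : ℕ → Ultrafilter ℕ) (xlim : Ultrafilter ℕ),
      Function.Injective x ∧ Filter.Tendsto x F (𝓝 xlim) := by
  obtain ⟨C, hC, hCF⟩ := hFσ
  rintro ⟨x, U, hinj, htend⟩
  have hF : ∀ S ∈ F, S.Infinite := fun S hS => by
    simpa using (mem_cofinite.1 (hfree hS)).infinite_compl
  obtain ⟨A, B, hB, hA⟩ := exists_separates_of_tendsto hF hC hCF hinj htend
  have hGδ : IsGδ (chiFun '' {S | S ∈ F})ᶜ := by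
    rw [hCF, compl_iUnion]
    exact .iInter_of_isOpen fun k => (hC k).isOpen_compl
  set G := {T : Set ℕ | T ∪ Aᶜ ∈ F}
  have hcompl : ∀ T, Tᶜ ∈ G ↔ T ∉ G := fun T =>
    ⟨fun hTc hT => by
      obtain ⟨n, ⟨hn, hn'⟩, hnA⟩ := (hA _ (inter_mem hT hTc)).nonempty
      simp only [mem_union, mem_compl_iff] at hn hn'
      tauto,
    (union_compl_mem_or_of_tendsto htend (fun n hn => (hB.1 n hn).1) hB.2 T).resolve_left⟩
  have hinf : ∀ T ∈ G, T.Infinite := fun T hT =>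
    (hA _ hT).mono fun n hn => hn.1.resolve_right (not_not.2 hn.2)
  exact not_isGδ_compl_image_chiFun hcompl hinf (isGδ_compl_image_chiFun_union hGδ Aᶜ)
end

section
/- Let F be the filter on ω consisting of all F ⊆ ω with lim_{n→∞} |F ∩ [2ⁿ, 2ⁿ⁺¹)|/2ⁿ = 1, and let X = ω ∪ {∞} be topologized so that each n ∈ ω is isolated and the neighborhoods of ∞ are the sets F ∪ {∞} for F ∈ F. Then the point ∞ has no countable i-network in X: for every countable family (N_i)_{i∈ω} of infinite subsets of X there is a neighborhood of ∞ containing no N_i. -/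
open Set Filter Topology

/-!
Choose `m i ∈ N i` with `m i ≥ 2 ^ i`. The block `[2ⁿ, 2ⁿ⁺¹)` can only contain the points
`m 0, …, m n`, so the range of `m` has at most `n + 1` points in a block of size `2ⁿ`, and its
complement has block density `1`. Hence removing the range of `m` from `X` leaves a neighbourhood
of `∞` that misses a point of every `N i`.
-/

noncomputable def blockDensity (A : Set ℕ) (n : ℕ) : ℝ :=
  ((A ∩ Ico (2 ^ n) (2 ^ (n + 1))).ncard : ℝ) / 2 ^ n

lemma ncard_Ico_two_pow (n : ℕ) : (Ico (2 ^ n) (2 ^ (n + 1))).ncard = 2 ^ n := by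
  rw [ncard_eq_toFinset_card', toFinset_Ico, Nat.card_Ico, pow_succ]
  omega

lemma blockDensity_compl (A : Set ℕ) (n : ℕ) : blockDensity Aᶜ n = 1 - blockDensity A n := by
  have hsplit := ncard_inter_add_ncard_sdiff_eq_ncard (Ico (2 ^ n) (2 ^ (n + 1))) A
  rw [ncard_Ico_two_pow, sdiff_eq, inter_comm _ A, inter_comm _ Aᶜ] at hsplit
  have hpos : (0 : ℝ) < 2 ^ n := by positivity
  rw [blockDensity, blockDensity, eq_sub_iff_add_eq, ← add_div, div_eq_one_iff_eq hpos.ne']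
  exact_mod_cast (add_comm _ _).trans hsplit

lemma tendsto_succ_div_two_pow :
    Tendsto (fun n : ℕ => ((n : ℝ) + 1) / 2 ^ n) atTop (𝓝 0) := by
  have h := (tendsto_pow_const_div_const_pow_of_one_lt 1 one_lt_two).add
    (tendsto_pow_atTop_nhds_zero_of_lt_one (r := (1 / 2 : ℝ)) (by norm_num) (by norm_num))
  rw [add_zero] at h
  refine h.congr fun n => ?_
  rw [pow_one, div_pow, one_pow, add_div]

lemma tendsto_blockDensity_zero {A : Set ℕ}
    (hA : ∀ n, (A ∩ Ico (2 ^ n) (2 ^ (n + 1))).ncard ≤ n + 1) :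
    Tendsto (blockDensity A) atTop (𝓝 0) :=
  squeeze_zero (fun n => by unfold blockDensity; positivity)
    (fun n => div_le_div_of_nonneg_right (by exact_mod_cast hA n) (by positivity))
    tendsto_succ_div_two_pow

lemma ncard_range_inter_Ico_le {m : ℕ → ℕ} (hm : ∀ i, 2 ^ i ≤ m i) (n : ℕ) :
    (range m ∩ Ico (2 ^ n) (2 ^ (n + 1))).ncard ≤ n + 1 := by
  have hsub : range m ∩ Ico (2 ^ n) (2 ^ (n + 1)) ⊆ m '' Iic n := by
    rintro _ ⟨⟨i, rfl⟩, -, hlt⟩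
    exact ⟨i, Nat.lt_succ_iff.mp ((Nat.pow_lt_pow_iff_right one_lt_two).mp
      ((hm i).trans_lt hlt)), rfl⟩
  calc (range m ∩ Ico (2 ^ n) (2 ^ (n + 1))).ncard
      ≤ (m '' Iic n).ncard := ncard_le_ncard hsub ((finite_Iic n).image m)
    _ ≤ (Iic n).ncard := ncard_image_le (finite_Iic n)
    _ = n + 1 := by rw [ncard_eq_toFinset_card', toFinset_Iic, Nat.card_Iic]

lemma Set.Infinite.exists_some_mem_ge {s : Set (Option ℕ)} (hs : s.Infinite) (b : ℕ) :
    ∃ m, some m ∈ s ∧ b ≤ m := by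
  have hpre : (some ⁻¹' s).Infinite := fun hfin =>
    hs <| ((hfin.image some).insert none).subset fun
      | none, _ => mem_insert _ _
      | some k, hk => mem_insert_of_mem _ ⟨k, hk, rfl⟩
  obtain ⟨m, hm, hbm⟩ := hpre.exists_gt b
  exact ⟨m, hm, hbm.le⟩

/-- let `F` be the density filter of sets `A` with
`lim_n |A ∩ [2ⁿ,2ⁿ⁺¹)|/2ⁿ = 1`, and topologize `X = ω ∪ {∞}` (here `Option ℕ`, with
`∞ = none`) so that points of `ω` are isolated and neighborhoods of `∞` are given by
members of `F`.  Then `∞` has no countable i-network. -/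
theorem stmt17 (t : TopologicalSpace (Option ℕ))
    (ht : ∀ U : Set (Option ℕ), t.IsOpen U ↔
      (none ∈ U → Filter.Tendsto
        (fun n : ℕ =>
          (({m : ℕ | some m ∈ U} ∩ Set.Ico (2 ^ n) (2 ^ (n + 1))).ncard : ℝ) / 2 ^ n)
        Filter.atTop (𝓝 1))) :
    ∀ N : ℕ → Set (Option ℕ), (∀ i, (N i).Infinite) →
      ∃ U : Set (Option ℕ), t.IsOpen U ∧ none ∈ U ∧ ∀ i, ¬N i ⊆ U := by
  intro N hN
  choose m hmN hm using fun i => (hN i).exists_some_mem_ge (2 ^ i)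
  have hpre : {k : ℕ | some k ∈ insert none (some '' (range m)ᶜ)} = (range m)ᶜ := by
    ext k
    simp
  refine ⟨insert none (some '' (range m)ᶜ), ?_, mem_insert _ _, fun i hsub => ?_⟩
  · refine (ht _).2 fun _ => ?_
    rw [hpre]
    have h := (tendsto_blockDensity_zero (ncard_range_inter_Ico_le hm)).const_sub 1
    rw [sub_zero] at h
    exact h.congr fun n => (blockDensity_compl _ n).symm
  · obtain ⟨k, hk, hkm⟩ :=
      (mem_insert_iff.mp (hsub (hmN i))).resolve_left (Option.some_ne_none _)
    exact hk ⟨i, Option.some_injective _ hkm.symm⟩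
end
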